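/- Let H : CPO → CPO be locally continuous and α : HA → A an H-algebra with least element. Then (A, α) with the assignment of least solutions is a complete Elgot algebra: the least-solution assignment is functorial (for every morphism of equations h : e → f we have e† = f† ∘ h) and compositional ((f† ▹ e)† = (f ⊞ e)† ∘ inl). -/

import Mathlib

open OmegaCompletePartialOrder

namespace CPOSum

variable {α β : Type} [OmegaCompletePartialOrder α] [OmegaCompletePartialOrder β]

theorem exists_inl (c : Chain (α ⊕ β)) (a₀ : α) (h : c 0 = Sum.inl a₀) (n : ℕ) :
    ∃ a, c n = Sum.inl a := by
  have h0 : c 0 ≤ c n := c.monotone (Nat.zero_le n)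
  rw [h] at h0
  cases hn : c n with
  | inl a => exact ⟨a, rfl⟩
  | inr b => rw [hn] at h0; exact absurd h0 Sum.not_inl_le_inr

theorem exists_inr (c : Chain (α ⊕ β)) (b₀ : β) (h : c 0 = Sum.inr b₀) (n : ℕ) :
    ∃ b, c n = Sum.inr b := by
  have h0 : c 0 ≤ c n := c.monotone (Nat.zero_le n)
  rw [h] at h0
  cases hn : c n with
  | inl a => rw [hn] at h0; exact absurd h0 Sum.not_inr_le_inl
  | inr b => exact ⟨b, rfl⟩

/-- The left component of a chain in `α ⊕ β` starting in `α`. -/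
def leftChain (c : Chain (α ⊕ β)) (a₀ : α) (h : c 0 = Sum.inl a₀) : Chain α where
  toFun n := ((c n).getLeft?).getD a₀
  monotone' := by
    intro m n hmn
    obtain ⟨a, ha⟩ := exists_inl c a₀ h m
    obtain ⟨b, hb⟩ := exists_inl c a₀ h n
    have hc : c m ≤ c n := c.monotone hmn
    rw [ha, hb] at hc
    simp [ha, hb, Sum.getLeft?]
    exact Sum.inl_le_inl_iff.mp hc

/-- The right component of a chain in `α ⊕ β` starting in `β`. -/
def rightChain (c : Chain (α ⊕ β)) (b₀ : β) (h : c 0 = Sum.inr b₀) : Chain β where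
  toFun n := ((c n).getRight?).getD b₀
  monotone' := by
    intro m n hmn
    obtain ⟨a, ha⟩ := exists_inr c b₀ h m
    obtain ⟨b, hb⟩ := exists_inr c b₀ h n
    have hc : c m ≤ c n := c.monotone hmn
    rw [ha, hb] at hc
    simp [ha, hb, Sum.getRight?]
    exact Sum.inr_le_inr_iff.mp hc

theorem leftChain_apply (c : Chain (α ⊕ β)) (a₀ : α) (h : c 0 = Sum.inl a₀)
    {i : ℕ} {a : α} (ha : c i = Sum.inl a) : leftChain c a₀ h i = a := by
  show ((c i).getLeft?).getD a₀ = a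
  rw [ha]
  rfl

theorem rightChain_apply (c : Chain (α ⊕ β)) (b₀ : β) (h : c 0 = Sum.inr b₀)
    {i : ℕ} {b : β} (hb : c i = Sum.inr b) : rightChain c b₀ h i = b := by
  show ((c i).getRight?).getD b₀ = b
  rw [hb]
  rfl

/-- The `ω`-complete partial order on the disjoint union `α ⊕ β`, with elements
of different summands incomparable (the coproduct in `CPO`): an `ω`-chain lies
entirely in one summand, and its supremum is computed there. -/
noncomputable instance instSumCPO : OmegaCompletePartialOrder (α ⊕ β) where
  ωSup c :=
    match h : c 0 with
    | Sum.inl a₀ => Sum.inl (ωSup (leftChain c a₀ h))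
    | Sum.inr b₀ => Sum.inr (ωSup (rightChain c b₀ h))
  le_ωSup := by
    intro c i
    try dsimp only
    split
    · rename_i a₀ h
      obtain ⟨a, ha⟩ := exists_inl c a₀ h i
      have hle := le_ωSup (leftChain c a₀ h) i
      rw [leftChain_apply c a₀ h ha] at hle
      rw [ha]
      exact Sum.inl_le_inl_iff.mpr hle
    · rename_i b₀ h
      obtain ⟨b, hb⟩ := exists_inr c b₀ h i
      have hle := le_ωSup (rightChain c b₀ h) i
      rw [rightChain_apply c b₀ h hb] at hle
      rw [hb]
      exact Sum.inr_le_inr_iff.mpr hle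
  ωSup_le := by
    intro c x hx
    try dsimp only
    split
    · rename_i a₀ h
      rcases x with ax | bx
      · refine Sum.inl_le_inl_iff.mpr (ωSup_le _ _ ?_)
        intro i
        obtain ⟨a, ha⟩ := exists_inl c a₀ h i
        have hi := hx i
        rw [ha] at hi
        rw [leftChain_apply c a₀ h ha]
        exact Sum.inl_le_inl_iff.mp hi
      · have h0 := hx 0
        rw [h] at h0
        exact absurd h0 Sum.not_inl_le_inr
    · rename_i b₀ h
      rcases x with ax | bx
      · have h0 := hx 0
        rw [h] at h0
        exact absurd h0 Sum.not_inr_le_inl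
      · refine Sum.inr_le_inr_iff.mpr (ωSup_le _ _ ?_)
        intro i
        obtain ⟨b, hb⟩ := exists_inr c b₀ h i
        have hi := hx i
        rw [hb] at hi
        rw [rightChain_apply c b₀ h hb]
        exact Sum.inr_le_inr_iff.mp hi

theorem ωSup_eq_inl (c : Chain (α ⊕ β)) (a₀ : α) (h : c 0 = Sum.inl a₀) :
    ωSup c = Sum.inl (ωSup (leftChain c a₀ h)) := by
  show (match h' : c 0 with
    | Sum.inl a₀ => Sum.inl (ωSup (leftChain c a₀ h'))
    | Sum.inr b₀ => Sum.inr (ωSup (rightChain c b₀ h'))) = _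
  split
  · rename_i a₁ h₁
    have ha : a₁ = a₀ := by
      have := h₁.symm.trans h
      exact Sum.inl_injective this
    subst ha
    rfl
  · rename_i b₁ h₁
    have := h₁.symm.trans h
    simp at this

theorem ωSup_eq_inr (c : Chain (α ⊕ β)) (b₀ : β) (h : c 0 = Sum.inr b₀) :
    ωSup c = Sum.inr (ωSup (rightChain c b₀ h)) := by
  show (match h' : c 0 with
    | Sum.inl a₀ => Sum.inl (ωSup (leftChain c a₀ h'))
    | Sum.inr b₀ => Sum.inr (ωSup (rightChain c b₀ h'))) = _
  split
  · rename_i a₁ h₁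
    have := h₁.symm.trans h
    simp at this
  · rename_i b₁ h₁
    have hb : b₁ = b₀ := by
      have := h₁.symm.trans h
      exact Sum.inr_injective this
    subst hb
    rfl

end CPOSum

/-- An object of the category `CPO` of `ω`-complete partial orders
(posets with joins of increasing `ω`-chains) and continuous maps. -/
structure CPOCat : Type 1 where
  carrier : Type
  [str : OmegaCompletePartialOrder carrier]

attribute [instance] CPOCat.str

instance : CoeSort CPOCat Type := ⟨CPOCat.carrier⟩

/-- A cpo `A` as an object of `CPO`. -/
def CPOCat.of (A : Type) [OmegaCompletePartialOrder A] : CPOCat := ⟨A⟩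

/-- The binary coproduct in `CPO`: the disjoint union with elements of
different summands incomparable. -/
@[reducible] noncomputable def CPOCat.sum (X Y : CPOCat) : CPOCat := ⟨X.carrier ⊕ Y.carrier⟩

/-- Coproduct injection `inl` as a continuous map. -/
noncomputable def cpoInl {X Y : CPOCat} : X →𝒄 CPOCat.sum X Y where
  toFun := Sum.inl
  monotone' := Sum.inl_mono
  map_ωSup' := by
    intro c
    rw [CPOSum.ωSup_eq_inl (α := X.carrier) (β := Y.carrier) (c.map (⟨Sum.inl, Sum.inl_mono⟩ : X.carrier →o X.carrier ⊕ Y.carrier)) (c 0) rfl]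
    have hch : CPOSum.leftChain (c.map (⟨Sum.inl, Sum.inl_mono⟩ : X.carrier →o X.carrier ⊕ Y.carrier)) (c 0) rfl = c := by
      apply Chain.ext
      funext n
      exact CPOSum.leftChain_apply _ (c 0) rfl (i := n) (a := c n) rfl
    rw [hch]

/-- Coproduct injection `inr` as a continuous map. -/
noncomputable def cpoInr {X Y : CPOCat} : Y →𝒄 CPOCat.sum X Y where
  toFun := Sum.inr
  monotone' := Sum.inr_mono
  map_ωSup' := by
    intro c
    rw [CPOSum.ωSup_eq_inr (α := X.carrier) (β := Y.carrier) (c.map (⟨Sum.inr, Sum.inr_mono⟩ : Y.carrier →o X.carrier ⊕ Y.carrier)) (c 0) rfl]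
    have hch : CPOSum.rightChain (c.map (⟨Sum.inr, Sum.inr_mono⟩ : Y.carrier →o X.carrier ⊕ Y.carrier)) (c 0) rfl = c := by
      apply Chain.ext
      funext n
      exact CPOSum.rightChain_apply _ (c 0) rfl (i := n) (b := c n) rfl
    rw [hch]

/-- Copairing `[f, g]` of continuous maps, as a continuous map on the coproduct. -/
noncomputable def cpoElim {X Y Z : CPOCat} (f : X →𝒄 Z) (g : Y →𝒄 Z) :
    CPOCat.sum X Y →𝒄 Z where
  toFun := Sum.elim f g
  monotone' := by
    rintro (x | x) (y | y) h
    · exact f.monotone (Sum.inl_le_inl_iff.mp h)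
    · exact absurd h Sum.not_inl_le_inr
    · exact absurd h Sum.not_inr_le_inl
    · exact g.monotone (Sum.inr_le_inr_iff.mp h)
  map_ωSup' := by
    intro c
    rcases h : c 0 with a₀ | b₀
    · rw [CPOSum.ωSup_eq_inl c a₀ h]
      show f (ωSup (CPOSum.leftChain c a₀ h)) = _
      rw [f.continuous]
      apply congrArg
      apply Chain.ext
      funext n
      obtain ⟨a, ha⟩ := CPOSum.exists_inl c a₀ h n
      show f (CPOSum.leftChain c a₀ h n) = Sum.elim f g (c n)
      rw [CPOSum.leftChain_apply c a₀ h ha, ha]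
      rfl
    · rw [CPOSum.ωSup_eq_inr c b₀ h]
      show g (ωSup (CPOSum.rightChain c b₀ h)) = _
      rw [g.continuous]
      apply congrArg
      apply Chain.ext
      funext n
      obtain ⟨b, hb⟩ := CPOSum.exists_inr c b₀ h n
      show g (CPOSum.rightChain c b₀ h n) = Sum.elim f g (c n)
      rw [CPOSum.rightChain_apply c b₀ h hb, hb]
      rfl

/-- `f + g` on coproducts, as a continuous map. -/
noncomputable def cpoSumMap {X X' Y Y' : CPOCat} (f : X →𝒄 X') (g : Y →𝒄 Y') :
    CPOCat.sum X Y →𝒄 CPOCat.sum X' Y' :=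
  cpoElim (cpoInl.comp f) (cpoInr.comp g)

open OmegaCompletePartialOrder.ContinuousHom in
/-- A locally continuous endofunctor of `CPO`: the action on hom-cpos
`CPO(X, Y) → CPO(HX, HY)` is continuous (monotone and preserving suprema of
`ω`-chains of continuous maps). -/
structure CPOFunctor : Type 1 where
  obj : CPOCat → CPOCat
  map : ∀ {X Y : CPOCat}, (X →𝒄 Y) → (obj X →𝒄 obj Y)
  map_id : ∀ X : CPOCat, map (ContinuousHom.id : X →𝒄 X) = ContinuousHom.id
  map_comp : ∀ {X Y Z : CPOCat} (f : X →𝒄 Y) (g : Y →𝒄 Z),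
    map (g.comp f) = (map g).comp (map f)
  mono : ∀ {X Y : CPOCat} (f g : X →𝒄 Y), f ≤ g → map f ≤ map g
  cont : ∀ {X Y : CPOCat} (c : Chain (X →𝒄 Y)),
    map (ωSup c) = ωSup (c.map ⟨fun f => map f, fun _ _ h => mono _ _ h⟩)

/-- `s` is a solution of the flat equation morphism `e : X →𝒄 HX + A`:
`s = [α, id] ∘ (Hs + id) ∘ e`. -/
noncomputable def CPOSol (H : CPOFunctor) {A : Type} [OmegaCompletePartialOrder A]
    (α : H.obj (CPOCat.of A) →𝒄 CPOCat.of A) {X : CPOCat}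
    (e : X →𝒄 CPOCat.sum (H.obj X) (CPOCat.of A)) (s : X →𝒄 CPOCat.of A) : Prop :=
  s = (cpoElim (α.comp (H.map s)) ContinuousHom.id).comp e

/-- The map `F : s ↦ [α, id] ∘ (Hs + id) ∘ e` on `CPO(X, A)`. -/
noncomputable def cpoEqFun (H : CPOFunctor) {A : Type} [OmegaCompletePartialOrder A]
    (α : H.obj (CPOCat.of A) →𝒄 CPOCat.of A) {X : CPOCat}
    (e : X →𝒄 CPOCat.sum (H.obj X) (CPOCat.of A)) (s : X →𝒄 CPOCat.of A) :
    X →𝒄 CPOCat.of A :=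
  (cpoElim (α.comp (H.map s)) ContinuousHom.id).comp e

/-- The approximations `e†₀ = const ⊥`, `e†_{n+1} = F (e†_n)`. -/
noncomputable def cpoIter (H : CPOFunctor) {A : Type} [OmegaCompletePartialOrder A]
    [OrderBot A] (α : H.obj (CPOCat.of A) →𝒄 CPOCat.of A) {X : CPOCat}
    (e : X →𝒄 CPOCat.sum (H.obj X) (CPOCat.of A)) : ℕ → (X →𝒄 CPOCat.of A)
  | 0 => ContinuousHom.const (⊥ : A)
  | n + 1 => cpoEqFun H α e (cpoIter H α e n)

/-- The combined flat equation morphism `f ⊞ e = (can + id) ∘ (id + f) ∘ [e, inr]`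
in `CPO`. -/
noncomputable def cpoPlus (H : CPOFunctor) {X Y : CPOCat} {A : Type}
    [OmegaCompletePartialOrder A]
    (e : X →𝒄 CPOCat.sum (H.obj X) Y)
    (f : Y →𝒄 CPOCat.sum (H.obj Y) (CPOCat.of A)) :
    CPOCat.sum X Y →𝒄 CPOCat.sum (H.obj (CPOCat.sum X Y)) (CPOCat.of A) :=
  let yPart : Y →𝒄 CPOCat.sum (H.obj (CPOCat.sum X Y)) (CPOCat.of A) :=
    (cpoSumMap (H.map cpoInr) ContinuousHom.id).comp f
  cpoElim ((cpoElim (cpoInl.comp (H.map cpoInl)) yPart).comp e) yPart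

/-- A complete Elgot algebra in `CPO`: chosen solutions of all flat equation
morphisms, satisfying functoriality and compositionality. -/
structure CPOCompleteElgot (H : CPOFunctor) (A : Type)
    [OmegaCompletePartialOrder A]
    (α : H.obj (CPOCat.of A) →𝒄 CPOCat.of A) : Type 1 where
  sol : ∀ (X : CPOCat), (X →𝒄 CPOCat.sum (H.obj X) (CPOCat.of A)) → (X →𝒄 CPOCat.of A)
  isSol : ∀ (X : CPOCat) (e : X →𝒄 CPOCat.sum (H.obj X) (CPOCat.of A)),
    CPOSol H α e (sol X e)
  functorial : ∀ (X Y : CPOCat) (e : X →𝒄 CPOCat.sum (H.obj X) (CPOCat.of A))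
    (f : Y →𝒄 CPOCat.sum (H.obj Y) (CPOCat.of A)) (h : X →𝒄 Y),
    (cpoSumMap (H.map h) ContinuousHom.id).comp e = f.comp h →
      sol X e = (sol Y f).comp h
  compositional : ∀ (X Y : CPOCat) (e : X →𝒄 CPOCat.sum (H.obj X) Y)
    (f : Y →𝒄 CPOCat.sum (H.obj Y) (CPOCat.of A)),
    sol X ((cpoSumMap ContinuousHom.id (sol Y f)).comp e) =
      (sol (CPOCat.sum X Y) (cpoPlus H e f)).comp cpoInl

/-! Least solutions are Kleene fixed points `⨆ₙ Fₑⁿ ⊥` of the map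
`Fₑ s = [α, id] ∘ (Hs + id) ∘ e` on `CPO(X, A)`, which is continuous because `H` is locally
continuous. For functoriality, precomposition with a morphism of equations `h : e → f`
intertwines `F_f` with `Fₑ` and preserves `⊥`, so it carries the Kleene chain of `f` onto that
of `e`. For compositionality, `[(f† ▹ e)†, f†]` solves `f ⊞ e`, and `(f ⊞ e)† ∘ inl` solves
`f† ▹ e` because `(f ⊞ e)† ∘ inr = f†` (functoriality along `inr : f → f ⊞ e`); leastness
gives the two inequalities. -/

theorem OmegaCompletePartialOrder.fixedPoints.map_ωSup_iterateChain {P Q : Type*}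
    [OmegaCompletePartialOrder P] [OmegaCompletePartialOrder Q]
    (F : P →𝒄 P) (G : Q →𝒄 Q) (φ : P →𝒄 Q) (hφ : Function.Semiconj φ F G)
    {x : P} {y : Q} (hxy : φ x = y) (hx : x ≤ F x) (hy : y ≤ G y) :
    φ (ωSup (iterateChain F x hx)) = ωSup (iterateChain G y hy) := by
  subst hxy
  rw [φ.continuous]
  congr 1
  ext n
  exact hφ.iterate_right n x

namespace OmegaCompletePartialOrder.ContinuousHom

variable {α β γ : Type*} [OmegaCompletePartialOrder α] [OmegaCompletePartialOrder β]
  [OmegaCompletePartialOrder γ]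

def precomp (h : α →𝒄 β) : (β →𝒄 γ) →𝒄 (α →𝒄 γ) where
  toFun s := s.comp h
  monotone' _ _ hst x := hst (h x)
  map_ωSup' _ := rfl

theorem const_bot_le [OrderBot β] (f : α →𝒄 β) : const ⊥ ≤ f :=
  fun _ => bot_le

end OmegaCompletePartialOrder.ContinuousHom

theorem cpoSum_hom_ext {X Y Z : CPOCat} {u v : CPOCat.sum X Y →𝒄 Z}
    (hl : u.comp cpoInl = v.comp cpoInl) (hr : u.comp cpoInr = v.comp cpoInr) : u = v := by
  ext (x | y)
  exacts [DFunLike.congr_fun hl x, DFunLike.congr_fun hr y]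

@[simp]
theorem cpoElim_comp_inl {X Y Z : CPOCat} (f : X →𝒄 Z) (g : Y →𝒄 Z) :
    (cpoElim f g).comp cpoInl = f :=
  rfl

@[simp]
theorem cpoElim_comp_inr {X Y Z : CPOCat} (f : X →𝒄 Z) (g : Y →𝒄 Z) :
    (cpoElim f g).comp cpoInr = g :=
  rfl

theorem cpoElim_comp_cpoSumMap {X X' Y Y' Z : CPOCat} (f : X' →𝒄 Z) (g : Y' →𝒄 Z)
    (p : X →𝒄 X') (q : Y →𝒄 Y') :
    (cpoElim f g).comp (cpoSumMap p q) = cpoElim (f.comp p) (g.comp q) := by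
  ext (x | y) <;> rfl

theorem CPOFunctor.ωScottContinuous_map (H : CPOFunctor) {X Y : CPOCat} :
    ωScottContinuous (H.map : (X →𝒄 Y) → (H.obj X →𝒄 H.obj Y)) :=
  ωScottContinuous.of_monotone_map_ωSup ⟨H.mono, H.cont⟩

section LeastSolutions

variable {H : CPOFunctor} {A : Type} [OmegaCompletePartialOrder A]
  {α : H.obj (CPOCat.of A) →𝒄 CPOCat.of A}

theorem ωScottContinuous_sumElim_map {X : CPOCat} (v : H.obj X ⊕ A) :
    ωScottContinuous fun s : X →𝒄 CPOCat.of A => Sum.elim (fun z => α (H.map s z)) id v := by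
  cases v with
  | inl z =>
    exact α.ωScottContinuous.comp
      (ContinuousHom.ωScottContinuous_apply H.ωScottContinuous_map ωScottContinuous.const)
  | inr a => exact ωScottContinuous.const

variable (H α) in
noncomputable def cpoEqFunHom {X : CPOCat} (e : X →𝒄 CPOCat.sum (H.obj X) (CPOCat.of A)) :
    (X →𝒄 CPOCat.of A) →𝒄 (X →𝒄 CPOCat.of A) where
  toFun := cpoEqFun H α e
  monotone' _ _ hst x := (ωScottContinuous_sumElim_map (e x)).monotone hst
  map_ωSup' c := by
    ext x
    exact (ωScottContinuous_sumElim_map (e x)).map_ωSup c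

theorem cpoSol_iff {X : CPOCat} (e : X →𝒄 CPOCat.sum (H.obj X) (CPOCat.of A))
    (s : X →𝒄 CPOCat.of A) : CPOSol H α e s ↔ cpoEqFun H α e s = s :=
  eq_comm

theorem cpoEqFun_comp_of_equationMorphism {X Y : CPOCat}
    {e : X →𝒄 CPOCat.sum (H.obj X) (CPOCat.of A)} {f : Y →𝒄 CPOCat.sum (H.obj Y) (CPOCat.of A)}
    {h : X →𝒄 Y} (hyp : (cpoSumMap (H.map h) ContinuousHom.id).comp e = f.comp h)
    (s : Y →𝒄 CPOCat.of A) : cpoEqFun H α e (s.comp h) = (cpoEqFun H α f s).comp h := by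
  calc cpoEqFun H α e (s.comp h)
      = ((cpoElim (α.comp (H.map s)) ContinuousHom.id).comp
          (cpoSumMap (H.map h) ContinuousHom.id)).comp e := by
        rw [cpoElim_comp_cpoSumMap]
        show (cpoElim (α.comp (H.map (s.comp h))) ContinuousHom.id).comp e = _
        rw [H.map_comp]
        rfl
    _ = (cpoEqFun H α f s).comp h := by rw [← ContinuousHom.comp_assoc, hyp]; rfl

theorem cpoEqFun_sumMap_id_comp {X Y : CPOCat} (e : X →𝒄 CPOCat.sum (H.obj X) Y)
    (g : Y →𝒄 CPOCat.of A) (s : X →𝒄 CPOCat.of A) :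
    cpoEqFun H α ((cpoSumMap ContinuousHom.id g).comp e) s =
      (cpoElim (α.comp (H.map s)) g).comp e := by
  rw [cpoEqFun, ContinuousHom.comp_assoc, cpoElim_comp_cpoSumMap]
  rfl

theorem cpoPlus_comp_inr {X Y : CPOCat} (e : X →𝒄 CPOCat.sum (H.obj X) Y)
    (f : Y →𝒄 CPOCat.sum (H.obj Y) (CPOCat.of A)) :
    (cpoSumMap (H.map cpoInr) ContinuousHom.id).comp f = (cpoPlus H e f).comp cpoInr :=
  rfl

theorem cpoEqFun_cpoPlus_comp_inr {X Y : CPOCat} (e : X →𝒄 CPOCat.sum (H.obj X) Y)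
    (f : Y →𝒄 CPOCat.sum (H.obj Y) (CPOCat.of A)) (u : CPOCat.sum X Y →𝒄 CPOCat.of A) :
    (cpoEqFun H α (cpoPlus H e f) u).comp cpoInr = cpoEqFun H α f (u.comp cpoInr) :=
  (cpoEqFun_comp_of_equationMorphism (cpoPlus_comp_inr e f) u).symm

theorem cpoEqFun_cpoPlus_comp_inl {X Y : CPOCat} (e : X →𝒄 CPOCat.sum (H.obj X) Y)
    (f : Y →𝒄 CPOCat.sum (H.obj Y) (CPOCat.of A)) (u : CPOCat.sum X Y →𝒄 CPOCat.of A) :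
    (cpoEqFun H α (cpoPlus H e f) u).comp cpoInl =
      (cpoElim (α.comp (H.map (u.comp cpoInl))) (cpoEqFun H α f (u.comp cpoInr))).comp e := by
  rw [← cpoEqFun_cpoPlus_comp_inr e f u]
  ext x
  simp only [ContinuousHom.comp_apply]
  rcases hx : e x with z | y
  all_goals
    show Sum.elim (fun v => α (H.map u v)) id
      (Sum.elim (fun v => Sum.inl (H.map cpoInl v))
        (fun y => cpoSumMap (H.map cpoInr) ContinuousHom.id (f y)) (e x)) = _
    rw [hx]
  · show α (H.map u (H.map cpoInl z)) = α (H.map (u.comp cpoInl) z)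
    rw [H.map_comp]
    rfl
  · rfl

variable [OrderBot A]

instance : OrderBot (CPOCat.of A) := inferInstanceAs (OrderBot A)

variable (H α) in
noncomputable def cpoLeastSol {X : CPOCat} (e : X →𝒄 CPOCat.sum (H.obj X) (CPOCat.of A)) :
    X →𝒄 CPOCat.of A :=
  ωSup (fixedPoints.iterateChain (cpoEqFunHom H α e) (ContinuousHom.const ⊥)
    (ContinuousHom.const_bot_le _))

theorem isLeast_cpoLeastSol {X : CPOCat} (e : X →𝒄 CPOCat.sum (H.obj X) (CPOCat.of A)) :
    IsLeast {t | CPOSol H α e t} (cpoLeastSol H α e) :=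
  ⟨(cpoSol_iff e _).2 (fixedPoints.ωSup_iterate_mem_fixedPoint (cpoEqFunHom H α e) _ _),
    fun t ht => fixedPoints.ωSup_iterate_le_fixedPoint _ _ _
      ((cpoSol_iff e t).1 ht) (ContinuousHom.const_bot_le _)⟩

theorem cpoLeastSol_functorial {X Y : CPOCat}
    {e : X →𝒄 CPOCat.sum (H.obj X) (CPOCat.of A)} {f : Y →𝒄 CPOCat.sum (H.obj Y) (CPOCat.of A)}
    {h : X →𝒄 Y} (hyp : (cpoSumMap (H.map h) ContinuousHom.id).comp e = f.comp h) :
    cpoLeastSol H α e = (cpoLeastSol H α f).comp h :=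
  (fixedPoints.map_ωSup_iterateChain (cpoEqFunHom H α f) (cpoEqFunHom H α e)
    (ContinuousHom.precomp h) (fun s => (cpoEqFun_comp_of_equationMorphism hyp s).symm) rfl
    (ContinuousHom.const_bot_le _) (ContinuousHom.const_bot_le _)).symm

theorem cpoLeastSol_compositional {X Y : CPOCat} (e : X →𝒄 CPOCat.sum (H.obj X) Y)
    (f : Y →𝒄 CPOCat.sum (H.obj Y) (CPOCat.of A)) :
    cpoLeastSol H α ((cpoSumMap ContinuousHom.id (cpoLeastSol H α f)).comp e) =
      (cpoLeastSol H α (cpoPlus H e f)).comp cpoInl := by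
  set f' := cpoLeastSol H α f
  set s := cpoLeastSol H α ((cpoSumMap ContinuousHom.id f').comp e)
  set w := cpoLeastSol H α (cpoPlus H e f)
  have hf' : cpoEqFun H α f f' = f' := (cpoSol_iff _ _).1 (isLeast_cpoLeastSol f).1
  have hw : cpoEqFun H α (cpoPlus H e f) w = w := (cpoSol_iff _ _).1 (isLeast_cpoLeastSol _).1
  have hw_inr : w.comp cpoInr = f' := (cpoLeastSol_functorial (cpoPlus_comp_inr e f)).symm
  have hsol_elim : CPOSol H α (cpoPlus H e f) (cpoElim s f') := by
    refine (cpoSol_iff _ _).2 (cpoSum_hom_ext ?_ ?_)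
    · rw [cpoEqFun_cpoPlus_comp_inl, cpoElim_comp_inl, cpoElim_comp_inr, hf',
        ← cpoEqFun_sumMap_id_comp]
      exact (cpoSol_iff _ _).1 (isLeast_cpoLeastSol _).1
    · rw [cpoEqFun_cpoPlus_comp_inr, cpoElim_comp_inr, hf']
  have hsol_inl : CPOSol H α ((cpoSumMap ContinuousHom.id f').comp e) (w.comp cpoInl) := by
    rw [cpoSol_iff]
    conv_rhs => rw [← hw]
    rw [cpoEqFun_cpoPlus_comp_inl, hw_inr, hf', cpoEqFun_sumMap_id_comp]
  exact le_antisymm ((isLeast_cpoLeastSol _).2 hsol_inl)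
    fun x => (isLeast_cpoLeastSol _).2 hsol_elim (Sum.inl x)

end LeastSolutions

/-- Let `H : CPO → CPO` be locally continuous and `α : HA →𝒄 A` an `H`-algebra
with least element.  Then `(A, α)` together with the assignment of least
solutions is a complete Elgot algebra: the least-solution assignment is
functorial and compositional. -/
theorem cpo_least_solutions_complete_elgot (H : CPOFunctor) (A : Type)
    [OmegaCompletePartialOrder A] [OrderBot A]
    (α : H.obj (CPOCat.of A) →𝒄 CPOCat.of A) :
    ∃ E : CPOCompleteElgot H A α,
      ∀ (X : CPOCat) (e : X →𝒄 CPOCat.sum (H.obj X) (CPOCat.of A)),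
        IsLeast {t | CPOSol H α e t} (E.sol X e) :=
  ⟨{ sol := fun _ => cpoLeastSol H α
     isSol := fun _ e => (isLeast_cpoLeastSol e).1
     functorial := fun _ _ _ _ _ => cpoLeastSol_functorial
     compositional := fun _ _ => cpoLeastSol_compositional },
    fun _ => isLeast_cpoLeastSol⟩
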